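/- arXiv:0803.0842 — 7 statements merged into one kernel-verified Lean document; each statement's English description precedes it below -/
import Mathlib

section
/- Define the bilinear product t_x t_y = Σ_{z∈W} γ̃_{x,y,z⁻¹} t_z on the free F-vector space J̃ with basis {t_w : w∈W}, where γ̃_{x,y,z} = Σ_λ Σ_{i,j,k} f_λ^{-1} c_{x,λ}^{ij} c_{y,λ}^{jk} c_{z,λ}^{ki}. Assuming the Schur orthogonality relations Σ_{w∈W} c_{w,λ}^{ij} c_{w⁻¹,μ}^{kl} = δ_{il}δ_{jk}δ_{λμ} f_λ, this product is associative: (t_x t_y) t_z = t_x (t_y t_z) for all x,y,z ∈ W. -/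
/-- Schur orthogonality relations for leading matrix coefficients. -/
def SchurRelations {F W Λ : Type*} [Field F] [Fintype W] [DecidableEq Λ]
    (inv : W → W) (d : Λ → ℕ) (f : Λ → F) (c : W → Λ → ℕ → ℕ → F) : Prop :=
  ∀ (l m : Λ) (i j k kl : ℕ), i < d l → j < d l → k < d m → kl < d m →
    ∑ w : W, c w l i j * c (inv w) m k kl =
      if l = m ∧ i = kl ∧ j = k then f l else 0

/-- The structure constants γ̃_{x,y,z}. -/
noncomputable def gammaC {F W Λ : Type*} [Field F] [Fintype Λ]
    (d : Λ → ℕ) (f : Λ → F) (c : W → Λ → ℕ → ℕ → F) (x y z : W) : F :=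
  ∑ l : Λ, (f l)⁻¹ *
    ∑ i ∈ Finset.range (d l), ∑ j ∈ Finset.range (d l), ∑ k ∈ Finset.range (d l),
      c x l i j * c y l j k * c z l k i

/-- The coefficients ñ_w. -/
noncomputable def nC {F W Λ : Type*} [Field F] [Fintype Λ]
    (inv : W → W) (d : Λ → ℕ) (f : Λ → F) (c : W → Λ → ℕ → ℕ → F) (w : W) : F :=
  ∑ l : Λ, (f l)⁻¹ * ∑ i ∈ Finset.range (d l), c (inv w) l i i

set_option linter.unusedSectionVars false
set_option linter.unusedVariables false

section
variable {F W : Type*} [Field F] [Fintype W]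

private lemma aux0 {ι κ : Type*} (s : Finset ι) (t : Finset κ) (a : ι → W → F) (b : κ → W → F) :
    ∑ u : W, (∑ l ∈ s, a l u) * (∑ m ∈ t, b m u)
      = ∑ l ∈ s, ∑ m ∈ t, ∑ u : W, a l u * b m u := by
  simp only [Finset.sum_mul_sum]
  rw [Finset.sum_comm]
  exact Finset.sum_congr rfl fun l _ => Finset.sum_comm

private lemma pull (a b : F) (S T : W → F) :
    (∑ u : W, (a * S u) * (b * T u)) = a * b * ∑ u : W, S u * T u := by
  rw [Finset.mul_sum]
  exact Finset.sum_congr rfl fun u _ => by ring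

private lemma aux1 {ι κ : Type*} (s : Finset ι) (t : Finset κ)
    (A₁ A₂ : ι → F) (E : W → ι → F) (C : W → κ → F) (B₁ B₂ : κ → F) :
    ∑ u : W, (∑ p ∈ s, A₁ p * A₂ p * E u p) * (∑ q ∈ t, C u q * B₁ q * B₂ q)
      = ∑ p ∈ s, ∑ q ∈ t, (A₁ p * A₂ p * (B₁ q * B₂ q)) * ∑ u : W, E u p * C u q := by
  rw [aux0]
  refine Finset.sum_congr rfl fun p _ => Finset.sum_congr rfl fun q _ => ?_
  rw [Finset.mul_sum]
  exact Finset.sum_congr rfl fun u _ => by ring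

private lemma aux2 {ι κ : Type*} (s : Finset ι) (t : Finset κ)
    (A₁ A₂ : ι → F) (E : W → ι → F) (C : W → κ → F) (B₁ B₂ : κ → F) :
    ∑ u : W, (∑ p ∈ s, A₁ p * E u p * A₂ p) * (∑ q ∈ t, B₁ q * B₂ q * C u q)
      = ∑ p ∈ s, ∑ q ∈ t, (A₁ p * A₂ p * (B₁ q * B₂ q)) * ∑ u : W, E u p * C u q := by
  rw [aux0]
  refine Finset.sum_congr rfl fun p _ => Finset.sum_congr rfl fun q _ => ?_
  rw [Finset.mul_sum]
  exact Finset.sum_congr rfl fun u _ => by ring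

end

section
variable {F W Λ : Type*} [Field F] [Fintype W] [DecidableEq W] [Fintype Λ] [DecidableEq Λ]
  (inv : W → W) (d : Λ → ℕ) (f : Λ → F) (c : W → Λ → ℕ → ℕ → F)

private lemma schur_inv (hinv : Function.Involutive inv) (schur : SchurRelations inv d f c)
    (l m : Λ) (i j k kl : ℕ) (hi : i < d l) (hj : j < d l) (hk : k < d m) (hkl : kl < d m) :
    ∑ u : W, c (inv u) l i j * c u m k kl = if l = m ∧ i = kl ∧ j = k then f l else 0 := by
  have := schur l m i j k kl hi hj hk hkl
  rw [← this]
  exact Fintype.sum_bijective inv hinv.bijective _ _ (fun u => by rw [hinv u])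

private lemma gamma_prod (x y v : W) :
    gammaC d f c x y v = ∑ l : Λ, (f l)⁻¹ *
      ∑ p ∈ (Finset.range (d l) ×ˢ Finset.range (d l)) ×ˢ Finset.range (d l),
        c x l p.1.1 p.1.2 * c y l p.1.2 p.2 * c v l p.2 p.1.1 := by
  simp [gammaC, Finset.sum_product]

private lemma half1 (hinv : Function.Involutive inv) (schur : SchurRelations inv d f c)
    (x y z w : W) :
    ∑ u : W, gammaC d f c x y (inv u) * gammaC d f c u z (inv w)
      = ∑ l : Λ, ∑ p ∈ (Finset.range (d l) ×ˢ Finset.range (d l)) ×ˢ Finset.range (d l),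
          ∑ r ∈ Finset.range (d l),
          (f l)⁻¹ * (f l)⁻¹ * f l *
            (c x l p.1.1 p.1.2 * c y l p.1.2 p.2 * c z l p.2 r * c (inv w) l r p.1.1) := by
  simp only [gamma_prod]
  rw [aux0]
  refine Finset.sum_congr rfl fun l _ => ?_
  have step1 : ∀ m : Λ,
      ∑ u : W, ((f l)⁻¹ *
          ∑ p ∈ (Finset.range (d l) ×ˢ Finset.range (d l)) ×ˢ Finset.range (d l),
            c x l p.1.1 p.1.2 * c y l p.1.2 p.2 * c (inv u) l p.2 p.1.1) *
        ((f m)⁻¹ *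
          ∑ q ∈ (Finset.range (d m) ×ˢ Finset.range (d m)) ×ˢ Finset.range (d m),
            c u m q.1.1 q.1.2 * c z m q.1.2 q.2 * c (inv w) m q.2 q.1.1)
      = (f l)⁻¹ * (f m)⁻¹ *
          ∑ p ∈ (Finset.range (d l) ×ˢ Finset.range (d l)) ×ˢ Finset.range (d l),
          ∑ q ∈ (Finset.range (d m) ×ˢ Finset.range (d m)) ×ˢ Finset.range (d m),
            (c x l p.1.1 p.1.2 * c y l p.1.2 p.2 * (c z m q.1.2 q.2 * c (inv w) m q.2 q.1.1)) *
              (if l = m ∧ p.2 = q.1.2 ∧ p.1.1 = q.1.1 then f l else 0) := by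
    intro m
    rw [pull, aux1]
    congr 1
    refine Finset.sum_congr rfl fun p hp => Finset.sum_congr rfl fun q hq => ?_
    simp only [Finset.mem_product, Finset.mem_range] at hp hq
    rw [schur_inv inv d f c hinv schur l m p.2 p.1.1 q.1.1 q.1.2 hp.2 hp.1.1 hq.1.1 hq.1.2]
  simp only [step1]
  rw [Finset.sum_eq_single_of_mem l (Finset.mem_univ l)
    (fun m _ hm => by simp [Ne.symm hm])]
  simp only [true_and, eq_self_iff_true, if_true]
  rw [Finset.mul_sum]
  refine Finset.sum_congr rfl fun p hp => ?_
  simp only [Finset.mem_product, Finset.mem_range] at hp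
  rw [show (∑ q ∈ (Finset.range (d l) ×ˢ Finset.range (d l)) ×ˢ Finset.range (d l),
        (c x l p.1.1 p.1.2 * c y l p.1.2 p.2 * (c z l q.1.2 q.2 * c (inv w) l q.2 q.1.1)) *
          (if p.2 = q.1.2 ∧ p.1.1 = q.1.1 then f l else 0))
      = ∑ r ∈ Finset.range (d l),
        (c x l p.1.1 p.1.2 * c y l p.1.2 p.2 * (c z l p.2 r * c (inv w) l r p.1.1)) * f l from ?_]
  · rw [Finset.mul_sum]
    exact Finset.sum_congr rfl fun r _ => by ring
  · simp only [Finset.sum_product]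
    rw [Finset.sum_eq_single_of_mem p.1.1 (Finset.mem_range.mpr hp.1.1)
      (fun a _ ha => by simp [Ne.symm ha])]
    rw [Finset.sum_eq_single_of_mem p.2 (Finset.mem_range.mpr hp.2)
      (fun b _ hb => by simp [Ne.symm hb])]
    simp

private lemma half2 (hinv : Function.Involutive inv) (schur : SchurRelations inv d f c)
    (x y z w : W) :
    ∑ u : W, gammaC d f c x u (inv w) * gammaC d f c y z (inv u)
      = ∑ l : Λ, ∑ p ∈ (Finset.range (d l) ×ˢ Finset.range (d l)) ×ˢ Finset.range (d l),
          ∑ b ∈ Finset.range (d l),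
          (f l)⁻¹ * (f l)⁻¹ * f l *
            (c x l p.1.1 p.1.2 * c y l p.1.2 b * c z l b p.2 * c (inv w) l p.2 p.1.1) := by
  simp only [gamma_prod]
  rw [aux0]
  refine Finset.sum_congr rfl fun l _ => ?_
  have step1 : ∀ m : Λ,
      ∑ u : W, ((f l)⁻¹ *
          ∑ p ∈ (Finset.range (d l) ×ˢ Finset.range (d l)) ×ˢ Finset.range (d l),
            c x l p.1.1 p.1.2 * c u l p.1.2 p.2 * c (inv w) l p.2 p.1.1) *
        ((f m)⁻¹ *
          ∑ q ∈ (Finset.range (d m) ×ˢ Finset.range (d m)) ×ˢ Finset.range (d m),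
            c y m q.1.1 q.1.2 * c z m q.1.2 q.2 * c (inv u) m q.2 q.1.1)
      = (f l)⁻¹ * (f m)⁻¹ *
          ∑ p ∈ (Finset.range (d l) ×ˢ Finset.range (d l)) ×ˢ Finset.range (d l),
          ∑ q ∈ (Finset.range (d m) ×ˢ Finset.range (d m)) ×ˢ Finset.range (d m),
            (c x l p.1.1 p.1.2 * c (inv w) l p.2 p.1.1 * (c y m q.1.1 q.1.2 * c z m q.1.2 q.2)) *
              (if l = m ∧ p.1.2 = q.1.1 ∧ p.2 = q.2 then f l else 0) := by
    intro m
    rw [pull, aux2]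
    congr 1
    refine Finset.sum_congr rfl fun p hp => Finset.sum_congr rfl fun q hq => ?_
    simp only [Finset.mem_product, Finset.mem_range] at hp hq
    rw [schur l m p.1.2 p.2 q.2 q.1.1 hp.1.2 hp.2 hq.2 hq.1.1]
  simp only [step1]
  rw [Finset.sum_eq_single_of_mem l (Finset.mem_univ l)
    (fun m _ hm => by simp [Ne.symm hm])]
  simp only [true_and, eq_self_iff_true, if_true]
  rw [Finset.mul_sum]
  refine Finset.sum_congr rfl fun p hp => ?_
  simp only [Finset.mem_product, Finset.mem_range] at hp
  rw [show (∑ q ∈ (Finset.range (d l) ×ˢ Finset.range (d l)) ×ˢ Finset.range (d l),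
        (c x l p.1.1 p.1.2 * c (inv w) l p.2 p.1.1 * (c y l q.1.1 q.1.2 * c z l q.1.2 q.2)) *
          (if p.1.2 = q.1.1 ∧ p.2 = q.2 then f l else 0))
      = ∑ b ∈ Finset.range (d l),
        (c x l p.1.1 p.1.2 * c (inv w) l p.2 p.1.1 * (c y l p.1.2 b * c z l b p.2)) * f l from ?_]
  · rw [Finset.mul_sum]
    exact Finset.sum_congr rfl fun b _ => by ring
  · simp only [Finset.sum_product]
    rw [Finset.sum_eq_single_of_mem p.1.2 (Finset.mem_range.mpr hp.1.2)
      (fun a _ ha => by simp [Ne.symm ha])]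
    refine Finset.sum_congr rfl fun b _ => ?_
    rw [Finset.sum_eq_single_of_mem p.2 (Finset.mem_range.mpr hp.2)
      (fun r _ hr => by simp [Ne.symm hr])]
    simp

end

/-- associativity of the product t_x t_y = Σ_z γ̃_{x,y,z⁻¹} t_z,
expressed on structure constants: the coefficient of t_w in (t_x t_y) t_z equals
the coefficient of t_w in t_x (t_y t_z). -/
theorem gamma_associative
    {F W Λ : Type*} [Field F] [Fintype W] [DecidableEq W] [Fintype Λ] [DecidableEq Λ]
    (inv : W → W) (hinv : Function.Involutive inv)
    (d : Λ → ℕ) (hd : ∀ l, 0 < d l)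
    (f : Λ → F) (hf : ∀ l, f l ≠ 0)
    (c : W → Λ → ℕ → ℕ → F)
    (schur : SchurRelations inv d f c) :
    ∀ x y z w : W,
      ∑ u : W, gammaC d f c x y (inv u) * gammaC d f c u z (inv w) =
        ∑ u : W, gammaC d f c x u (inv w) * gammaC d f c y z (inv u) := by
  intro x y z w
  rw [half1 inv d f c hinv schur x y z w, half2 inv d f c hinv schur x y z w]
  refine Finset.sum_congr rfl fun l _ => ?_
  simp only [Finset.sum_product]
  refine Finset.sum_congr rfl fun i _ => Finset.sum_congr rfl fun j _ => ?_
  exact Finset.sum_comm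
end

section
/- For each λ ∈ Λ, the linear map ρ̄^λ : J̃ → M_{d_λ}(F) sending t_w to the matrix (c_{w,λ}^{ij})_{1≤i,j≤d_λ} is multiplicative: ρ̄^λ(t_x t_y) = ρ̄^λ(t_x) ρ̄^λ(t_y) for all x,y ∈ W, i.e. ρ̄^λ is an algebra representation of J̃. -/
/-- the map ρ̄^λ : t_w ↦ (c_{w,λ}^{ij}) is multiplicative, i.e.
the (i,j)-entry of ρ̄^λ(t_x t_y) equals that of ρ̄^λ(t_x) ρ̄^λ(t_y). -/
theorem rho_bar_multiplicative
    {F W Λ : Type*} [Field F] [Fintype W] [DecidableEq W] [Fintype Λ] [DecidableEq Λ]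
    (inv : W → W) (hinv : Function.Involutive inv)
    (d : Λ → ℕ) (hd : ∀ l, 0 < d l)
    (f : Λ → F) (hf : ∀ l, f l ≠ 0)
    (c : W → Λ → ℕ → ℕ → F)
    (schur : SchurRelations inv d f c) :
    ∀ (l : Λ) (x y : W) (i j : ℕ), i < d l → j < d l →
      ∑ z : W, gammaC d f c x y (inv z) * c z l i j =
        ∑ k ∈ Finset.range (d l), c x l i k * c y l k j := by
  intro l x y i j hi hj
  have hz : ∀ (m : Λ) (k a : ℕ), k < d m → a < d m →
      ∑ z : W, c (inv z) m k a * c z l i j =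
        if m = l ∧ k = j ∧ a = i then f m else 0 := by
    intro m k a hk ha
    have hb := Fintype.sum_bijective inv hinv.bijective
      (fun z => c z m k a * c (inv z) l i j) (fun z => c (inv z) m k a * c z l i j)
      (fun z => by simp only [hinv z])
    rw [← hb, schur m l k a i j hk ha hi hj]
  calc ∑ z : W, gammaC d f c x y (inv z) * c z l i j
      = ∑ m : Λ, ∑ a ∈ Finset.range (d m), ∑ b ∈ Finset.range (d m),
          ∑ k ∈ Finset.range (d m), ∑ z : W,
            (f m)⁻¹ * (c x m a b * c y m b k * (c (inv z) m k a * c z l i j)) := by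
        simp only [gammaC, Finset.sum_mul, Finset.mul_sum]
        rw [Finset.sum_comm]
        refine Finset.sum_congr rfl fun m _ => ?_
        rw [Finset.sum_comm]
        refine Finset.sum_congr rfl fun a _ => ?_
        rw [Finset.sum_comm]
        refine Finset.sum_congr rfl fun b _ => ?_
        rw [Finset.sum_comm]
        exact Finset.sum_congr rfl fun k _ => Finset.sum_congr rfl fun z _ => by ring
    _ = ∑ m : Λ, ∑ a ∈ Finset.range (d m), ∑ b ∈ Finset.range (d m),
          ∑ k ∈ Finset.range (d m),
            (f m)⁻¹ * (c x m a b * c y m b k *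
              (if m = l ∧ k = j ∧ a = i then f m else 0)) := by
        refine Finset.sum_congr rfl fun m _ => Finset.sum_congr rfl fun a ha =>
          Finset.sum_congr rfl fun b _ => Finset.sum_congr rfl fun k hk => ?_
        rw [← Finset.mul_sum, ← Finset.mul_sum, hz m k a (Finset.mem_range.1 hk) (Finset.mem_range.1 ha)]
    _ = ∑ b ∈ Finset.range (d l), c x l i b * c y l b j := by
        rw [Finset.sum_eq_single l]
        · rw [Finset.sum_eq_single i]
          · refine Finset.sum_congr rfl fun b _ => ?_
            rw [Finset.sum_eq_single j]
            · rw [if_pos ⟨rfl, rfl, rfl⟩, mul_comm ((f l)⁻¹), mul_assoc,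
                mul_inv_cancel₀ (hf l), mul_one]
            · intro k _ hkj
              rw [if_neg (by tauto), mul_zero, mul_zero]
            · intro hjmem
              exact absurd (Finset.mem_range.2 hj) hjmem
          · intro a _ hai
            refine Finset.sum_eq_zero fun b _ => Finset.sum_eq_zero fun k _ => ?_
            rw [if_neg (by tauto), mul_zero, mul_zero]
          · intro himem
            exact absurd (Finset.mem_range.2 hi) himem
        · intro m _ hml
          refine Finset.sum_eq_zero fun a _ => Finset.sum_eq_zero fun b _ =>
            Finset.sum_eq_zero fun k _ => ?_
          rw [if_neg (by tauto), mul_zero, mul_zero]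
        · intro hlmem
          exact absurd (Finset.mem_univ l) hlmem
end

section
/- If moreover for λ ≠ μ in Λ one has Σ_{w∈W} c_{w,λ}^{ij} c_{w⁻¹,μ}^{kl} = 0 for all i,j,k,l, then the representations ρ̄^λ and ρ̄^μ of J̃ are not equivalent; consequently, since dim J̃ = |W| = Σ_λ d_λ², the algebra J̃ is split semisimple with {ρ̄^λ : λ∈Λ} a complete set of pairwise inequivalent absolutely irreducible representations. -/
/-- for λ ≠ μ the representations ρ̄^λ, ρ̄^μ are not equivalent,
and since |W| = Σ_λ d_λ², the algebra J̃ is split semisimple with the ρ̄^λ a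
complete set of irreducible representations; the latter is expressed by the
bijectivity of the map a ↦ (ρ̄^λ(a))_λ onto the product of matrix algebras. -/
theorem rho_bar_inequivalent_and_split_semisimple
    {F W Λ : Type*} [Field F] [Fintype W] [DecidableEq W] [Fintype Λ] [DecidableEq Λ]
    (inv : W → W) (hinv : Function.Involutive inv)
    (d : Λ → ℕ) (hd : ∀ l, 0 < d l)
    (f : Λ → F) (hf : ∀ l, f l ≠ 0)
    (hcard : Fintype.card W = ∑ l : Λ, (d l) ^ 2)
    (c : W → Λ → ℕ → ℕ → F)
    (schur : SchurRelations inv d f c) :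
    (∀ l m : Λ, l ≠ m →
      ¬ ∃ U : Matrix (Fin (d l)) (Fin (d l)) F, IsUnit U ∧ d l = d m ∧
        ∀ w : W,
          U * (Matrix.of fun i j : Fin (d l) => c w l i j) =
            (Matrix.of fun i j : Fin (d l) => c w m i j) * U) ∧
    Function.Bijective
      (fun (a : W → F) (l : Λ) =>
        Matrix.of fun i j : Fin (d l) => ∑ w : W, a w * c w l i j) := by
  have schur : ∀ (l m : Λ) (i j k kl : ℕ), i < d l → j < d l → k < d m → kl < d m →
      ∑ w : W, c w l i j * c (inv w) m k kl =
        if l = m ∧ i = kl ∧ j = k then f l else 0 := schur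
  constructor
  · rintro l m hlm ⟨U, hU, hdm, hcomm⟩
    have hne : Nonempty (Fin (d l)) := ⟨⟨0, hd l⟩⟩
    set j0 : Fin (d l) := ⟨0, hd l⟩ with hj0
    have hU0 : U = 0 := by
      ext i i'
      have key : ∀ w : W, ∑ p : Fin (d l), U i p * c w l p j0 =
          ∑ p : Fin (d l), c w m i p * U p j0 := by
        intro w
        have := congrFun (congrFun (hcomm w) i) j0
        simpa [Matrix.mul_apply] using this
      have h1 : ∑ w : W, (∑ p : Fin (d l), U i p * c w l p (j0:ℕ)) * c (inv w) l j0 i' =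
          U i i' * f l := by
        simp only [Finset.sum_mul, mul_assoc]
        rw [Finset.sum_comm]
        calc ∑ p : Fin (d l), ∑ w : W, U i p * (c w l p j0 * c (inv w) l j0 i')
            = ∑ p : Fin (d l), U i p * ∑ w : W, c w l p j0 * c (inv w) l j0 i' := by
              simp [Finset.mul_sum]
          _ = ∑ p : Fin (d l), U i p * (if (p : ℕ) = (i' : ℕ) then f l else 0) := by
              refine Finset.sum_congr rfl fun p _ => ?_
              rw [schur l l p j0 j0 i' p.isLt j0.isLt j0.isLt i'.isLt]
              simp
          _ = U i i' * f l := by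
              simp only [Fin.val_inj, mul_ite, mul_zero]
              simp [Finset.sum_ite_eq']
      have h2 : ∑ w : W, (∑ p : Fin (d l), c w m i p * U p j0) * c (inv w) l j0 i' = 0 := by
        simp only [Finset.sum_mul, mul_right_comm]
        rw [Finset.sum_comm]
        refine Finset.sum_eq_zero fun p _ => ?_
        rw [← Finset.sum_mul, schur m l i p j0 i' (hdm ▸ i.isLt) (hdm ▸ p.isLt) j0.isLt i'.isLt]
        simp [Ne.symm hlm]
      have : U i i' * f l = 0 := by
        rw [← h1, ← h2]
        exact Finset.sum_congr rfl fun w _ => by rw [key w]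
      simpa [hf l] using this
    exact hU.ne_zero hU0
  ·
    let Φ : (W → F) →ₗ[F] ∀ l : Λ, Matrix (Fin (d l)) (Fin (d l)) F :=
      { toFun := fun a l => Matrix.of fun i j => ∑ w : W, a w * c w l i j
        map_add' := by
          intro a b; funext l; ext i j
          simp [add_mul, Finset.sum_add_distrib]
        map_smul' := by
          intro r a; funext l; ext i j
          simp [Finset.mul_sum, mul_assoc] }
    have hsurj : Function.Surjective Φ := by
      intro T
      refine ⟨fun w => ∑ l : Λ, (f l)⁻¹ * ∑ i : Fin (d l), ∑ j : Fin (d l),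
        T l i j * c (inv w) l j i, ?_⟩
      funext m
      ext k kl
      show (∑ w : W, (∑ l : Λ, (f l)⁻¹ * ∑ i : Fin (d l), ∑ j : Fin (d l),
        T l i j * c (inv w) l j i) * c w m k kl) = T m k kl
      have key : ∀ (l : Λ) (j i : Fin (d l)),
          ∑ w : W, c (inv w) l (j:ℕ) (i:ℕ) * c w m k kl =
            if l = m ∧ (j:ℕ) = (kl:ℕ) ∧ (i:ℕ) = (k:ℕ) then f l else 0 := by
        intro l j i
        rw [← schur l m j i k kl j.isLt i.isLt k.isLt kl.isLt]
        exact Fintype.sum_bijective inv hinv.bijective _ _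
          (fun x => by rw [hinv x])
      calc ∑ w : W, (∑ l : Λ, (f l)⁻¹ * ∑ i : Fin (d l), ∑ j : Fin (d l),
              T l i j * c (inv w) l j i) * c w m k kl
          = ∑ l : Λ, (f l)⁻¹ * ∑ i : Fin (d l), ∑ j : Fin (d l),
              T l i j * ∑ w : W, c (inv w) l j i * c w m k kl := by
            simp only [Finset.sum_mul, Finset.mul_sum, mul_assoc]
            rw [Finset.sum_comm]
            refine Finset.sum_congr rfl fun l _ => ?_
            rw [Finset.sum_comm]
            refine Finset.sum_congr rfl fun i _ => ?_
            rw [Finset.sum_comm]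
        _ = ∑ l : Λ, (f l)⁻¹ * ∑ i : Fin (d l), ∑ j : Fin (d l),
              T l i j * (if l = m ∧ (j:ℕ) = (kl:ℕ) ∧ (i:ℕ) = (k:ℕ) then f l else 0) := by
            refine Finset.sum_congr rfl fun l _ => ?_
            congr 1
            refine Finset.sum_congr rfl fun i _ => Finset.sum_congr rfl fun j _ => ?_
            rw [key l j i]
        _ = T m k kl := by
            rw [Finset.sum_eq_single m]
            · simp only [true_and, eq_self_iff_true, if_pos]
              have : ∀ i : Fin (d m), (∑ j : Fin (d m),
                  T m i j * (if (j:ℕ) = (kl:ℕ) ∧ (i:ℕ) = (k:ℕ) then f m else 0)) =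
                  if i = k then T m i kl * f m else 0 := by
                intro i
                by_cases hik : i = k
                · subst hik
                  simp only [and_true, Fin.val_inj, if_pos rfl]
                  simp [Finset.sum_ite_eq', mul_ite]
                · simp only [if_neg hik]
                  refine Finset.sum_eq_zero fun j _ => ?_
                  rw [if_neg, mul_zero]
                  exact fun h => hik (Fin.val_inj.mp h.2)
              simp only [this]
              rw [Finset.sum_ite_eq' Finset.univ k fun i => T m i kl * f m]
              simp only [Finset.mem_univ, if_pos]
              rw [mul_comm (T m k kl) (f m), ← mul_assoc, inv_mul_cancel₀ (hf m), one_mul]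
            · intro l _ hlm
              simp only [if_neg, hlm, false_and, if_false, mul_zero]
              simp
            · intro h; exact absurd (Finset.mem_univ m) h
    have hfd : FiniteDimensional F (∀ l : Λ, Matrix (Fin (d l)) (Fin (d l)) F) :=
      inferInstance
    have hrank : Module.finrank F (W → F) =
        Module.finrank F (∀ l : Λ, Matrix (Fin (d l)) (Fin (d l)) F) := by
      rw [Module.finrank_pi, hcard, Module.finrank_pi_fintype]
      refine Finset.sum_congr rfl fun l _ => ?_
      rw [Module.finrank_matrix]
      simp [sq]
    have hinj : Function.Injective Φ :=
      (LinearMap.injective_iff_surjective_of_finrank_eq_finrank hrank).mpr hsurj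
    exact ⟨hinj, hsurj⟩
end

section
/- Let ρ, σ : A → M_d(K) be two equivalent representations of a K-algebra A, with ρ irreducible, and suppose U ∈ M_d(O) (O a valuation ring in K with maximal ideal p and residue field F) intertwines them: U ρ(a) = σ(a) U for all a in a spanning set, with U having some entry outside p. If the residue matrices ρ̄(a) (obtained by taking residues of suitably normalized entries) define an irreducible representation over F, then the residue matrix Ū of U is invertible in M_d(F). -/
/-- let O be a valuation ring of K with residue field F. A matrix
U over O with nonzero residue Ū which intertwines (at the residue level) a
family ρ̄ defining an irreducible representation with another family σ̄ has
invertible residue Ū. -/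
theorem intertwiner_residue_invertible
    {K ι : Type*} [Field K] (O : ValuationSubring K) {d : ℕ}
    (U : Matrix (Fin d) (Fin d) O)
    (rhoBar sigmaBar : ι → Matrix (Fin d) (Fin d) (IsLocalRing.ResidueField O))
    (hU0 : U.map (IsLocalRing.residue O) ≠ 0)
    (hint : ∀ i : ι,
      U.map (IsLocalRing.residue O) * rhoBar i = sigmaBar i * U.map (IsLocalRing.residue O))
    (hirr : ∀ V : Submodule (IsLocalRing.ResidueField O) (Fin d → IsLocalRing.ResidueField O),
      (∀ i : ι, ∀ v ∈ V, (rhoBar i).mulVec v ∈ V) → V = ⊥ ∨ V = ⊤) :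
    IsUnit (U.map (IsLocalRing.residue O)) := by
  set M := U.map (IsLocalRing.residue O) with hM
  rw [← Matrix.mulVec_injective_iff_isUnit]
  have hker := hirr (LinearMap.ker M.mulVecLin) ?_
  · rcases hker with h | h
    · have hinj := LinearMap.ker_eq_bot.mp h
      intro x y hxy
      exact hinj (by simpa [Matrix.mulVecLin_apply] using hxy)
    · exfalso
      apply hU0
      ext i j
      have : M.mulVec (Pi.single j 1) = 0 := by
        have : (Pi.single j 1 : Fin d → IsLocalRing.ResidueField O) ∈
            LinearMap.ker M.mulVecLin := h ▸ Submodule.mem_top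
        simpa using this
      have := congrFun this i
      simpa [Matrix.mulVec_single] using this
  · intro i v hv
    simp only [LinearMap.mem_ker, Matrix.mulVecLin_apply] at hv ⊢
    have : (M * rhoBar i).mulVec v = (sigmaBar i * M).mulVec v := by rw [hint i]
    rw [← Matrix.mulVec_mulVec, ← Matrix.mulVec_mulVec, hv, Matrix.mulVec_zero] at this
    exact this
end

section
/- If for each λ the leading matrix coefficients satisfy the symmetry c_{w,λ}^{ij} = c_{w⁻¹,λ}^{ji} for all w ∈ W and all i,j, then the structure constants satisfy γ̃_{x,y,z} = γ̃_{y⁻¹,x⁻¹,z⁻¹} for all x,y,z ∈ W; consequently the linear map t_w ↦ t_{w⁻¹} is an algebra anti-involution of J̃. -/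
/-- if c_{w,λ}^{ij} = c_{w⁻¹,λ}^{ji} then
γ̃_{x,y,z} = γ̃_{y⁻¹,x⁻¹,z⁻¹}, so t_w ↦ t_{w⁻¹} is an anti-involution of J̃. -/
theorem gamma_anti_involution
    {F W Λ : Type*} [Field F] [Fintype W] [Fintype Λ]
    (inv : W → W) (hinv : Function.Involutive inv)
    (d : Λ → ℕ) (hd : ∀ l, 0 < d l)
    (f : Λ → F) (hf : ∀ l, f l ≠ 0)
    (c : W → Λ → ℕ → ℕ → F)
    (hsym : ∀ (w : W) (l : Λ) (i j : ℕ), c w l i j = c (inv w) l j i) :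
    ∀ x y z : W, gammaC d f c x y z = gammaC d f c (inv y) (inv x) (inv z) := by
  intro x y z
  have h : ∀ (w : W) (l : Λ) (i j : ℕ), c (inv w) l i j = c w l j i := by
    intro w l i j; rw [hsym, hinv]
  unfold gammaC
  refine Finset.sum_congr rfl fun l _ => ?_
  congr 1
  simp only [h]
  have trip : ∀ (n : ℕ) (T : ℕ → ℕ → ℕ → F),
      (∑ i ∈ Finset.range n, ∑ j ∈ Finset.range n, ∑ k ∈ Finset.range n, T i j k)
    = ∑ k ∈ Finset.range n, ∑ j ∈ Finset.range n, ∑ i ∈ Finset.range n, T i j k := by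
    intro n T
    rw [Finset.sum_comm]
    rw [show (∑ j ∈ Finset.range n, ∑ i ∈ Finset.range n, ∑ k ∈ Finset.range n, T i j k)
        = ∑ j ∈ Finset.range n, ∑ k ∈ Finset.range n, ∑ i ∈ Finset.range n, T i j k from
        Finset.sum_congr rfl fun _ _ => Finset.sum_comm]
    exact Finset.sum_comm
  rw [trip]
  refine Finset.sum_congr rfl fun k _ => Finset.sum_congr rfl fun j _ =>
    Finset.sum_congr rfl fun i _ => ?_
  ring
end

section
/- Let (W,S) be the dihedral Coxeter group I_2(m) with generators s_1, s_2. For the 2-dimensional representation ρ_j of the generic Hecke algebra given by ρ_j(T_{s_1}) = [[−v_{s_1}^{-1}, 0],[μ_j, v_{s_2}]] and ρ_j(T_{s_2}) = [[v_{s_2}, 1],[0, −v_{s_2}^{-1}]] with μ_j = v_{s_1}v_{s_2}^{-1} + ζ^j + ζ^{-j} + v_{s_1}^{-1}v_{s_2}, the symmetric matrix Ω_j = [[v_{s_1}μ_j(v_{s_2}+v_{s_2}^{-1}), v_{s_1}μ_j],[v_{s_1}μ_j, v_{s_1}(v_{s_2}+v_{s_1}^{-1})]] satisfies Ω_j ρ_j(T_s)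 = ρ_j(T_s)^tr Ω_j for s ∈ {s_1, s_2}. -/
/-!
Since `Ω` is symmetric, `(Ω ρ)ᵀ = ρᵀ Ω`, so `Ω ρ = ρᵀ Ω` just says that `Ω ρ` is symmetric; for
`2 × 2` matrices that is one equation between the off-diagonal entries, which for both generators
is a ring identity in the entries `v₁, v₂, v₁⁻¹, v₂⁻¹, μ`, treated as independent.
-/

open Matrix

namespace Matrix

theorem mul_eq_transpose_mul_iff_isSymm {n R : Type*} [Fintype n] [CommSemiring R]
    {Ω ρ : Matrix n n R} (hΩ : Ω.IsSymm) : Ω * ρ = ρᵀ * Ω ↔ (Ω * ρ).IsSymm := by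
  rw [IsSymm, transpose_mul, hΩ.eq, eq_comm]

theorem isSymm_fin_two_iff {α : Type*} {A : Matrix (Fin 2) (Fin 2) α} :
    A.IsSymm ↔ A 1 0 = A 0 1 := by
  refine ⟨fun h => h.apply 0 1, fun h => IsSymm.ext fun i j => ?_⟩
  fin_cases i <;> fin_cases j
  exacts [rfl, h, h.symm, rfl]

/-- `!![…]` already is `of ![…]`, so `Matrix.of !![…]` applies `of` twice; `of_apply` cannot see
through the outer one, whose argument is typed as a matrix. -/
theorem of_matrix {m n α : Type*} (M : Matrix m n α) : of M = M := rfl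

end Matrix

theorem I2_invariant_form_general
    {R : Type*} [CommRing R]
    (v1 v2 : Rˣ)
    (μ : R)
    (ρ1 ρ2 Ω : Matrix (Fin 2) (Fin 2) R)
    (hρ1 : ρ1 = Matrix.of !![-((v1⁻¹ : Rˣ) : R), 0; μ, (v2 : R)])
    (hρ2 : ρ2 = Matrix.of !![(v2 : R), 1; 0, -((v2⁻¹ : Rˣ) : R)])
    (hΩ : Ω = Matrix.of !![(v1 : R) * μ * ((v2 : R) + ((v2⁻¹ : Rˣ) : R)), (v1 : R) * μ; (v1 : R) * μ, (v1 : R) * ((v2 : R) + ((v1⁻¹ : Rˣ) : R))]) :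
    Ω * ρ1 = ρ1ᵀ * Ω ∧ Ω * ρ2 = ρ2ᵀ * Ω := by
  simp only [of_matrix] at hρ1 hρ2 hΩ
  have hΩ_symm : Ω.IsSymm := isSymm_fin_two_iff.2 (by rw [hΩ]; rfl)
  simp only [mul_eq_transpose_mul_iff_isSymm hΩ_symm, isSymm_fin_two_iff]
  subst hρ1 hρ2 hΩ
  constructor <;> simp [mul_apply, Fin.sum_univ_two] <;> ring

/-- in type I₂(m), the symmetric matrix Ω_j intertwines the
2-dimensional representation ρ_j with its transpose on both generators:
Ω_j ρ_j(T_{s_i}) = ρ_j(T_{s_i})ᵀ Ω_j for i = 1,2. -/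
theorem I2_invariant_form
    {R : Type*} [CommRing R] (m j : ℕ) (hm : 3 ≤ m)
    (v1 v2 ζ : Rˣ) (hζ : ζ ^ m = 1)
    (μ : R) (hμ : μ = (v1 : R) * ((v2⁻¹ : Rˣ) : R) + ((ζ ^ j : Rˣ) : R) + ((ζ⁻¹ ^ j : Rˣ) : R) + ((v1⁻¹ : Rˣ) : R) * (v2 : R))
    (ρ1 ρ2 Ω : Matrix (Fin 2) (Fin 2) R)
    (hρ1 : ρ1 = Matrix.of !![-((v1⁻¹ : Rˣ) : R), 0; μ, (v2 : R)])
    (hρ2 : ρ2 = Matrix.of !![(v2 : R), 1; 0, -((v2⁻¹ : Rˣ) : R)])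
    (hΩ : Ω = Matrix.of !![(v1 : R) * μ * ((v2 : R) + ((v2⁻¹ : Rˣ) : R)), (v1 : R) * μ; (v1 : R) * μ, (v1 : R) * ((v2 : R) + ((v1⁻¹ : Rˣ) : R))]) :
    Ω * ρ1 = ρ1ᵀ * Ω ∧ Ω * ρ2 = ρ2ᵀ * Ω :=
  I2_invariant_form_general v1 v2 μ ρ1 ρ2 Ω hρ1 hρ2 hΩ
end

section
/- Define the relation E^λ ↭_L w to mean c_{w,λ}^{ij} ≠ 0 for some i,j, and build a graph on W joining x ≠ y when some λ satisfies E^λ ↭_L x and E^λ ↭_L y; call the connected components L-blocks. For an L-block 𝓕, the span J̃_𝓕 := span_F{t_w : w ∈ 𝓕} is a two-sided ideal of J̃, and J̃ = ⊕_𝓕 J̃_𝓕 as a direct sum of two-sided ideals over all L-blocks 𝓕. -/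
open scoped Classical

/-! A nonzero structure constant `γ̃_{x,y,z⁻¹}` exhibits one `λ` with `E^λ ↭_L x`, `E^λ ↭_L y`
and `E^λ ↭_L z⁻¹`, hence, by the symmetry under inversion, `E^λ ↭_L z`: so `x`, `y`, `z` lie in one
L-block. Consequently `t_x t_y` and `t_y t_x` only involve basis elements `t_z` from the L-block
of `x`, which makes each `J̃_𝓕` a two-sided ideal. The `J̃_𝓕` are the spans of the fibres of the
standard basis under the map to L-blocks, hence `J̃` is their internal direct sum. -/

theorem Module.Basis.isInternal_span_image_fiber {ι R M Q : Type*} [Ring R] [AddCommGroup M]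
    [Module R M] [DecidableEq Q] (b : Module.Basis ι R M) (π : ι → Q) :
    DirectSum.IsInternal fun q => Submodule.span R (b '' (π ⁻¹' {q})) := by
  rw [DirectSum.isInternal_submodule_iff_iSupIndep_and_iSup_eq_top]
  constructor
  · intro q
    rw [← Submodule.span_iUnion₂, ← Set.image_iUnion₂]
    refine b.linearIndependent.disjoint_span_image (Set.disjoint_iUnion₂_right.mpr ?_)
    exact fun j hj => Set.disjoint_singleton.mpr (Ne.symm hj) |>.preimage π
  · rw [← Submodule.span_iUnion, ← Set.image_iUnion, ← Set.preimage_iUnion,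
      Set.iUnion_singleton_eq_range, Set.range_id', Set.preimage_univ, Set.image_univ, b.span_eq]

theorem Pi.mem_span_basisFun_image_iff {R ι : Type*} [Semiring R] [Finite ι] {s : Set ι}
    {a : ι → R} : a ∈ Submodule.span R (Pi.basisFun R ι '' s) ↔ ∀ i ∉ s, a i = 0 := by
  simp only [Module.Basis.mem_span_image, Set.subset_def, Finset.mem_coe,
    Finsupp.mem_support_iff, Pi.basisFun_repr]
  exact forall_congr' fun i => not_imp_comm

theorem Finset.sum_sum_mul_mul_eq_zero {ι κ R : Type*} [NonUnitalNonAssocSemiring R] {s : Finset ι}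
    {t : Finset κ} {a : ι → R} {b : κ → R} {γ : ι → κ → R}
    (h : ∀ x ∈ s, ∀ y ∈ t, a x ≠ 0 → b y ≠ 0 → γ x y = 0) :
    ∑ x ∈ s, ∑ y ∈ t, a x * b y * γ x y = 0 := by
  refine Finset.sum_eq_zero fun x hx => Finset.sum_eq_zero fun y hy => ?_
  by_cases hax : a x = 0
  · simp [hax]
  by_cases hby : b y = 0
  · simp [hby]
  simp [h x hx y hy hax hby]

theorem exists_coeff_ne_zero_of_gammaC_ne_zero {F W Λ : Type*} [Field F] [Fintype Λ]
    {d : Λ → ℕ} {f : Λ → F} {c : W → Λ → ℕ → ℕ → F} {x y z : W}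
    (h : gammaC d f c x y z ≠ 0) :
    ∃ l, (∃ i < d l, ∃ j < d l, c x l i j ≠ 0) ∧ (∃ i < d l, ∃ j < d l, c y l i j ≠ 0) ∧
      ∃ i < d l, ∃ j < d l, c z l i j ≠ 0 := by
  obtain ⟨l, -, hl⟩ := Finset.exists_ne_zero_of_sum_ne_zero h
  obtain ⟨i, hi, hi'⟩ := Finset.exists_ne_zero_of_sum_ne_zero (right_ne_zero_of_mul hl)
  obtain ⟨j, hj, hj'⟩ := Finset.exists_ne_zero_of_sum_ne_zero hi'
  obtain ⟨k, hk, hijk⟩ := Finset.exists_ne_zero_of_sum_ne_zero hj'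
  rw [Finset.mem_range] at hi hj hk
  obtain ⟨hxy, hz⟩ := mul_ne_zero_iff.mp hijk
  obtain ⟨hx, hy⟩ := mul_ne_zero_iff.mp hxy
  exact ⟨l, ⟨i, hi, j, hj, hx⟩, ⟨j, hj, k, hk, hy⟩, ⟨k, hk, i, hi, hz⟩⟩

theorem Lblocks_ideal_decomposition_general
    {F W Λ : Type*} [Field F] [Fintype W] [DecidableEq W] [Fintype Λ]
    (inv : W → W)
    (d : Λ → ℕ) (f : Λ → F) (c : W → Λ → ℕ → ℕ → F)
    (Rel : Λ → W → Prop)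
    (hRel : ∀ l w, Rel l w ↔ ∃ i, i < d l ∧ ∃ jj, jj < d l ∧ c w l i jj ≠ 0)
    (hsym : ∀ l w, Rel l w ↔ Rel l (inv w))
    (step : W → W → Prop)
    (hstep : ∀ x y, step x y ↔ ∃ l, Rel l x ∧ Rel l y)
    (mul : (W → F) → (W → F) → (W → F))
    (hmul : ∀ a b z, mul a b z = ∑ x : W, ∑ y : W, a x * b y * gammaC d f c x y (inv z))
    (fam : Quotient (Relation.EqvGen.setoid step) → Submodule F (W → F))
    (hfam : ∀ q, fam q = Submodule.span F
      {v | ∃ u : W, Quotient.mk (Relation.EqvGen.setoid step) u = q ∧ v = Pi.single u 1}) :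
    (∀ (q : Quotient (Relation.EqvGen.setoid step)) (a b : W → F),
      a ∈ fam q → mul a b ∈ fam q ∧ mul b a ∈ fam q) ∧
    DirectSum.IsInternal fam := by
  set π := Quotient.mk (Relation.EqvGen.setoid step)
  have fam_eq : fam = fun q => Submodule.span F (Pi.basisFun F W '' (π ⁻¹' {q})) := by
    ext1 q
    rw [hfam]
    congr 1
    ext v
    simp [eq_comm]
  have block_eq {x y z : W} (h : gammaC d f c x y (inv z) ≠ 0) : π x = π z ∧ π y = π z := by
    obtain ⟨l, hx, hy, hz⟩ := exists_coeff_ne_zero_of_gammaC_ne_zero h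
    have hzl : Rel l z := (hsym l z).mpr ((hRel l _).mpr hz)
    exact ⟨Quotient.sound (.rel _ _ ((hstep x z).mpr ⟨l, (hRel l x).mpr hx, hzl⟩)),
      Quotient.sound (.rel _ _ ((hstep y z).mpr ⟨l, (hRel l y).mpr hy, hzl⟩))⟩
  refine ⟨fun q a b ha => ?_, fam_eq ▸ (Pi.basisFun F W).isInternal_span_image_fiber π⟩
  simp only [fam_eq, Pi.mem_span_basisFun_image_iff, Set.mem_preimage,
    Set.mem_singleton_iff] at ha ⊢
  constructor
  · intro z hz
    rw [hmul]
    refine Finset.sum_sum_mul_mul_eq_zero fun x _ y _ hx _ => ?_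
    by_contra hγ
    exact hz ((block_eq hγ).1 ▸ not_imp_comm.mp (ha x) hx)
  · intro z hz
    rw [hmul]
    refine Finset.sum_sum_mul_mul_eq_zero fun x _ y _ _ hy => ?_
    by_contra hγ
    exact hz ((block_eq hγ).2 ▸ not_imp_comm.mp (ha y) hy)

/-- with E^λ ↭_L w expressed by `Rel`, the graph relation `step`,
and L-blocks the connected components (classes of the equivalence generated by
`step`), the span J̃_𝓕 of {t_w : w ∈ 𝓕} is a two-sided ideal of J̃ for each
L-block 𝓕, and J̃ decomposes as the internal direct sum of the J̃_𝓕. -/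
theorem Lblocks_ideal_decomposition
    {F W Λ : Type*} [Field F] [Fintype W] [DecidableEq W] [Fintype Λ]
    (inv : W → W) (hinv : Function.Involutive inv)
    (d : Λ → ℕ) (f : Λ → F) (c : W → Λ → ℕ → ℕ → F)
    (Rel : Λ → W → Prop)
    (hRel : ∀ l w, Rel l w ↔ ∃ i, i < d l ∧ ∃ jj, jj < d l ∧ c w l i jj ≠ 0)
    (hsym : ∀ l w, Rel l w ↔ Rel l (inv w))
    (step : W → W → Prop)
    (hstep : ∀ x y, step x y ↔ ∃ l, Rel l x ∧ Rel l y)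
    (mul : (W → F) → (W → F) → (W → F))
    (hmul : ∀ a b z, mul a b z = ∑ x : W, ∑ y : W, a x * b y * gammaC d f c x y (inv z))
    (fam : Quotient (Relation.EqvGen.setoid step) → Submodule F (W → F))
    (hfam : ∀ q, fam q = Submodule.span F
      {v | ∃ u : W, Quotient.mk (Relation.EqvGen.setoid step) u = q ∧ v = Pi.single u 1}) :
    (∀ (q : Quotient (Relation.EqvGen.setoid step)) (a b : W → F),
      a ∈ fam q → mul a b ∈ fam q ∧ mul b a ∈ fam q) ∧
    DirectSum.IsInternal fam :=
  Lblocks_ideal_decomposition_general inv d f c Rel hRel hsym step hstep mul hmul fam hfam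
end
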